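/- arXiv:1708.08047 — 3 statements merged into one kernel-verified Lean document; each statement's English description precedes it below -/
import Mathlib

section
/- Let d ≥ 2, n ∈ ℕ, λ = 2^{1/n}, Γ₀ > 0, let a_1, …, a_d be nonzero reals and α_1 < … < α_d positive integers with α_d = n. Define, for each pair j₁ < j₂, the bad set 𝒥^{(0)}_{bad}(Γ₀, j₁, j₂) = { l ∈ ℤ : 2^{−Γ₀} |a_{j₂}| λ^{α_{j₂} l} ≤ |a_{j₁}| λ^{α_{j₁} l} ≤ 2^{Γ₀} |a_{j₂}| λ^{α_{j₂} l} }, and let 𝒥^{(0)}_{good} be the complement in ℤ of the union over all pairs j₁ ≠ j₂ of these bad sets. Then 𝒥^{(0)}_{good} has at most d² connected components (maximal sets of consecutive integers). -/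
open Set

/-!
Dividing by `λ ^ (α j₂ * l)`, a bad set is the preimage of an interval under the monotone or
antitone map `l ↦ |a j₁| * (λ ^ (α j₁ - α j₂)) ^ l`, hence an interval of `ℤ`. In the complement
of a union of `N` intervals of `ℤ`, a component bounded below starts at some `m` with `m - 1` in
one of the intervals, and two different starts cannot share an interval; at most one component is
unbounded below. This gives at most `d (d - 1) + 1 ≤ d²` components.
-/

theorem ordConnected_setOf_mul_zpow_mem_Icc {b : ℝ} (hb : 0 < b) {A B s t : ℝ} (hB : 0 ≤ B)
    (p q : ℤ) :
    OrdConnected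
      {l : ℤ | B * b ^ (q * l) ∈ Icc (s * (A * b ^ (p * l))) (t * (A * b ^ (p * l)))} := by
  set f : ℤ → ℝ := fun l => B * (b ^ (q - p)) ^ l
  have hf : Monotone f ∨ Antitone f := by
    rcases le_total 1 (b ^ (q - p)) with h | h
    · exact .inl ((zpow_right_mono₀ h).const_mul hB)
    · exact .inr ((zpow_right_anti₀ (zpow_pos hb _) h).const_mul hB)
  have hset : {l : ℤ | B * b ^ (q * l) ∈ Icc (s * (A * b ^ (p * l))) (t * (A * b ^ (p * l)))} =
      f ⁻¹' Icc (s * A) (t * A) := by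
    ext l
    have hsplit : B * b ^ (q * l) = f l * b ^ (p * l) := by
      rw [show f l = B * (b ^ (q - p)) ^ l from rfl, ← zpow_mul, mul_assoc, ← zpow_add₀ hb.ne']
      ring_nf
    simp only [mem_ofPred_eq, mem_preimage, mem_Icc, hsplit, ← mul_assoc,
      mul_le_mul_iff_of_pos_right (zpow_pos hb (p * l))]
  rw [hset]
  exact hf.elim ordConnected_Icc.preimage_mono ordConnected_Icc.preimage_anti

namespace Set

theorem iUnion_ne_eq_iUnion_subtype {ι α : Type*} (B : ι → ι → Set α) :
    ⋃ (i : ι) (j : ι) (_ : i ≠ j), B i j = ⋃ p : {p : ι × ι // p.1 ≠ p.2}, B p.1.1 p.1.2 := by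
  ext
  simp

section LinearOrder

variable {α : Type*} [LinearOrder α] {S : Set α}

def ordConnectedComponents (S : Set α) : Set (Set α) :=
  ordConnectedComponent S '' S

theorem ordConnectedComponent_eq_of_mem {x y : α} (h : y ∈ ordConnectedComponent S x) :
    ordConnectedComponent S y = ordConnectedComponent S x :=
  (ordConnectedComponent_eq h).symm

theorem ordConnected_of_mem_ordConnectedComponents {C : Set α}
    (hC : C ∈ ordConnectedComponents S) : C.OrdConnected := by
  obtain ⟨x, -, rfl⟩ := hC
  infer_instance

theorem pairwiseDisjoint_ordConnectedComponents :
    (ordConnectedComponents S).PairwiseDisjoint id := by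
  rintro _ ⟨x, -, rfl⟩ _ ⟨y, -, rfl⟩ hne
  refine disjoint_left.2 fun z hzx hzy => hne ?_
  rw [← ordConnectedComponent_eq_of_mem hzx, ordConnectedComponent_eq_of_mem hzy]

theorem sUnion_ordConnectedComponents : ⋃₀ ordConnectedComponents S = S := by
  refine subset_antisymm (sUnion_subset ?_) fun x hx =>
    ⟨_, mem_image_of_mem _ hx, self_mem_ordConnectedComponent.2 hx⟩
  rintro _ ⟨x, -, rfl⟩
  exact ordConnectedComponent_subset

theorem eq_of_mem_ordConnectedComponents {C J : Set α} (hC : C ∈ ordConnectedComponents S)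
    (hJ : J.OrdConnected) (hCJ : C ⊆ J) (hJS : J ⊆ S) : J = C := by
  obtain ⟨x, hx, rfl⟩ := hC
  exact (subset_ordConnectedComponent (hCJ (self_mem_ordConnectedComponent.2 hx)) hJS).antisymm
    hCJ

theorem subsingleton_ordConnectedComponents_not_bddBelow :
    {C ∈ ordConnectedComponents S | ¬BddBelow C}.Subsingleton := by
  rintro _ ⟨⟨x, -, rfl⟩, hx⟩ _ ⟨⟨y, hy, rfl⟩, hy'⟩
  obtain ⟨z, hzx, hzy⟩ := not_bddBelow_iff.1 hx y
  obtain ⟨w, hwy, hwz⟩ := not_bddBelow_iff.1 hy' z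
  have hzy' : z ∈ ordConnectedComponent S y :=
    OrdConnected.out inferInstance hwy (self_mem_ordConnectedComponent.2 hy) ⟨hwz.le, hzy.le⟩
  rw [← ordConnectedComponent_eq_of_mem hzx, ordConnectedComponent_eq_of_mem hzy']

theorem exists_fin_enum_ordConnectedComponents {N : ℕ}
    (h : (ordConnectedComponents S).encard ≤ N) :
    ∃ (k : ℕ) (C : Fin k → Set α), k ≤ N ∧
      (∀ i, (C i).OrdConnected) ∧
      (Pairwise fun i i' => Disjoint (C i) (C i')) ∧
      (⋃ i, C i) = S ∧
      (∀ i, ∀ J : Set α, J.OrdConnected → C i ⊆ J → J ⊆ S → J = C i) := by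
  obtain ⟨hfin, hN⟩ := encard_le_coe_iff_finite_ncard_le.1 h
  have := hfin.to_subtype
  let e := (Finite.equivFin (ordConnectedComponents S)).symm
  have hmem : ∀ i, (e i : Set α) ∈ ordConnectedComponents S := fun i => (e i).2
  refine ⟨_, fun i => e i, (Nat.card_coe_set_eq _).trans_le hN, fun i => ?_, fun i j hij => ?_,
    ?_, fun i J => eq_of_mem_ordConnectedComponents (hmem i)⟩
  · exact ordConnected_of_mem_ordConnectedComponents (hmem i)
  · exact pairwiseDisjoint_ordConnectedComponents (hmem i) (hmem j)
      (Subtype.coe_injective.ne (e.injective.ne hij))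
  · exact (e.surjective.iUnion_comp fun C => (C : Set α)).trans
      (sUnion_eq_iUnion.symm.trans sUnion_ordConnectedComponents)

end LinearOrder

section Int

def leftEndpoints (S : Set ℤ) : Set ℤ :=
  {m | m ∈ S ∧ m - 1 ∉ S}

variable {S : Set ℤ}

theorem exists_mem_leftEndpoints_ordConnectedComponent_eq {C : Set ℤ}
    (hC : C ∈ ordConnectedComponents S) (hbdd : BddBelow C) :
    ∃ m ∈ leftEndpoints S, ordConnectedComponent S m = C := by
  obtain ⟨x, hx, rfl⟩ := hC
  have hm := Int.csInf_mem ⟨x, self_mem_ordConnectedComponent.2 hx⟩ hbdd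
  set m := sInf (ordConnectedComponent S x)
  refine ⟨m, ⟨ordConnectedComponent_subset hm, fun hm' => ?_⟩, ordConnectedComponent_eq_of_mem hm⟩
  have hpred : m - 1 ∈ ordConnectedComponent S m := by
    intro z hz
    rw [uIcc_of_ge (by omega), mem_Icc] at hz
    obtain rfl | rfl : z = m - 1 ∨ z = m := by omega
    exacts [hm', ordConnectedComponent_subset hm]
  have := csInf_le hbdd (mem_ordConnectedComponent_trans hm hpred)
  omega

theorem encard_leftEndpoints_compl_iUnion_le {ι : Type*} {B : ι → Set ℤ}
    (hB : ∀ i, (B i).OrdConnected) :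
    (leftEndpoints (⋃ i, B i)ᶜ).encard ≤ ENat.card ι := by
  choose f hf using fun m : leftEndpoints (⋃ i, B i)ᶜ => mem_iUnion.1 (not_not.1 m.2.2)
  refine ENat.card_le_card_of_injective (f := f) fun m m' hmm' => ?_
  -- `m - 1 < m ≤ m' - 1`, so convexity of `B (f m)` would put `m` in it
  have key : ∀ m m' : leftEndpoints (⋃ i, B i)ᶜ, f m = f m' → ¬(m : ℤ) < m' :=
    fun m m' h hlt => m.2.1 <|
      mem_iUnion.2 ⟨f m, (hB _).out (hf m) (h ▸ hf m') ⟨by omega, by omega⟩⟩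
  exact Subtype.ext (le_antisymm (not_lt.1 (key m' m hmm'.symm)) (not_lt.1 (key m m' hmm')))

theorem encard_ordConnectedComponents_compl_iUnion_le {ι : Type*} {B : ι → Set ℤ}
    (hB : ∀ i, (B i).OrdConnected) :
    (ordConnectedComponents (⋃ i, B i)ᶜ).encard ≤ ENat.card ι + 1 := by
  set S := (⋃ i, B i)ᶜ
  have hsub : ordConnectedComponents S ⊆ ordConnectedComponent S '' leftEndpoints S ∪
      {C ∈ ordConnectedComponents S | ¬BddBelow C} := fun C hC => by
    by_cases hbdd : BddBelow C
    exacts [.inl (exists_mem_leftEndpoints_ordConnectedComponent_eq hC hbdd), .inr ⟨hC, hbdd⟩]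
  calc (ordConnectedComponents S).encard
      ≤ (ordConnectedComponent S '' leftEndpoints S).encard +
          {C ∈ ordConnectedComponents S | ¬BddBelow C}.encard :=
        (encard_le_encard hsub).trans (encard_union_le _ _)
    _ ≤ ENat.card ι + 1 :=
        add_le_add ((encard_image_le _ _).trans (encard_leftEndpoints_compl_iUnion_le hB))
          (encard_le_one_iff_subsingleton.2 subsingleton_ordConnectedComponents_not_bddBelow)

end Int

end Set

theorem ENat.card_subtype_fst_ne_snd_add_one_le {α : Type*} [Fintype α] [Nonempty α] :
    ENat.card {p : α × α // p.1 ≠ p.2} + 1 ≤ (Fintype.card α ^ 2 : ℕ) := by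
  classical
  obtain ⟨a⟩ := ‹Nonempty α›
  have := Fintype.card_subtype_lt (p := fun p : α × α => p.1 ≠ p.2) (x := (a, a)) (by simp)
  rw [Fintype.card_prod, ← sq] at this
  rw [ENat.card_eq_coe_fintype_card]
  exact_mod_cast Order.add_one_le_of_lt this

/-- **The good scales have at most `d²` connected components.**
Let `d ≥ 2`, `n ∈ ℕ`, `λ = 2^{1/n}`, `Γ₀ > 0`, let `a 1, …, a d` be nonzero reals and
`α 1 < … < α d` positive integers with `α d = n`.  With the bad scales
`𝒥⁽⁰⁾_bad(Γ₀,j₁,j₂) = {l ∈ ℤ : 2^{−Γ₀}|a j₂|λ^{α j₂ l} ≤ |a j₁|λ^{α j₁ l} ≤ 2^{Γ₀}|a j₂|λ^{α j₂ l}}`,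
the good set `𝒥⁽⁰⁾_good = ℤ \ ⋃_{j₁ ≠ j₂} 𝒥⁽⁰⁾_bad(Γ₀,j₁,j₂)` has at most `d²` connected
components (maximal sets of consecutive integers). -/
theorem goodScales_components_le_sq
    (d n : ℕ) (hd : 2 ≤ d)
    (lam : ℝ) (hlam : lam = (2 : ℝ) ^ ((n : ℝ)⁻¹))
    (Γ₀ : ℝ)
    (a : Fin d → ℝ)
    (α : Fin d → ℕ)
    (good : Set ℤ)
    (hgood : good = (⋃ (j₁ : Fin d), ⋃ (j₂ : Fin d), ⋃ (_ : j₁ ≠ j₂),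
      {l : ℤ |
        (2 : ℝ) ^ (-Γ₀) * (|a j₂| * lam ^ ((α j₂ : ℤ) * l)) ≤ |a j₁| * lam ^ ((α j₁ : ℤ) * l) ∧
        |a j₁| * lam ^ ((α j₁ : ℤ) * l) ≤ (2 : ℝ) ^ Γ₀ * (|a j₂| * lam ^ ((α j₂ : ℤ) * l))})ᶜ) :
    ∃ (k : ℕ) (C : Fin k → Set ℤ), k ≤ d ^ 2 ∧
      (∀ i, (C i).OrdConnected) ∧
      (Pairwise fun i i' => Disjoint (C i) (C i')) ∧
      (⋃ i, C i) = good ∧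
      (∀ i, ∀ J : Set ℤ, J.OrdConnected → C i ⊆ J → J ⊆ good → J = C i) := by
  have hlam₀ : 0 < lam := hlam ▸ Real.rpow_pos_of_pos two_pos _
  have : Nonempty (Fin d) := ⟨⟨0, by omega⟩⟩
  rw [iUnion_ne_eq_iUnion_subtype] at hgood
  subst hgood
  apply exists_fin_enum_ordConnectedComponents
  calc _ ≤ ENat.card {p : Fin d × Fin d // p.1 ≠ p.2} + 1 :=
        encard_ordConnectedComponents_compl_iUnion_le fun p =>
          ordConnected_setOf_mul_zpow_mem_Icc hlam₀ (abs_nonneg _) _ _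
    _ ≤ (d ^ 2 : ℕ) := by simpa using ENat.card_subtype_fst_ne_snd_add_one_le (α := Fin d)
end

section
/- Let d ≥ 2, n ∈ ℕ, λ = 2^{1/n}, Γ₀ ≥ 1, let a_1, …, a_d be nonzero reals and α_1 < … < α_d ≤ n positive integers. Let I ⊆ 𝒥^{(0)}_{good} be a set of consecutive integers contained in the good scales (i.e., for every l ∈ I and every pair j ≠ j', either |a_j| λ^{α_j l} > 2^{Γ₀} |a_{j'}| λ^{α_{j'} l} or |a_{j'}| λ^{α_{j'} l} > 2^{Γ₀} |a_j| λ^{α_j l}). Then there exists a single index j₁ ∈ {1, …, d} such that for every l ∈ I and every j' ≠ j₁ one has |a_{j₁}| λ^{α_{j₁} l} > 2^{Γ₀} |a_{j'}| λ^{α_{j'} l}; that is, on each connected component of the good scales exactly one monomial dominates. -/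
/-!
Passing from scale `l` to `l + 1` multiplies the `j`-th monomial by `λ ^ α j ∈ [1, 2]`, so the
ratio of two monomials changes by a factor of at most `2 ≤ 2 ^ Γ₀`. Hence two different
monomials cannot dominate by `2 ^ Γ₀` at adjacent scales, while at every good scale the largest
monomial does dominate. Along an interval of good scales the dominant index never changes.
-/

open Real

def IsDominant {ι : Type*} (c : ℝ) (v : ι → ℝ) (j : ι) : Prop :=
  ∀ j', j' ≠ j → c * v j' < v j

section Dominance

variable {ι : Type*} {c : ℝ} {v r : ι → ℝ}

theorem exists_isDominant [Finite ι] [Nonempty ι] (hc : 1 ≤ c) (hv : ∀ i, 0 ≤ v i)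
    (hgood : ∀ j j', j ≠ j' → c * v j' < v j ∨ c * v j < v j') :
    ∃ j, IsDominant c v j := by
  obtain ⟨j, hmax⟩ := Finite.exists_max v
  refine ⟨j, fun j' hj' => (hgood j j' hj'.symm).resolve_right fun h => ?_⟩
  have : v j ≤ c * v j := le_mul_of_one_le_left (hv j) hc
  linarith [hmax j']

theorem IsDominant.eq_of_mul {j k : ι} (hc : 2 ≤ c) (hv : ∀ i, 0 ≤ v i)
    (hr₁ : ∀ i, 1 ≤ r i) (hr₂ : ∀ i, r i ≤ 2)
    (hj : IsDominant c v j) (hk : IsDominant c (v * r) k) : j = k := by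
  by_contra hne
  have : c * v j < v j := calc
    c * v j ≤ c * (v j * r j) := by gcongr; exact le_mul_of_one_le_right (hv j) (hr₁ j)
    _ < v k * r k := hk j hne
    _ ≤ v k * 2 := by gcongr; exacts [hv k, hr₂ k]
    _ ≤ c * v k := by rw [mul_comm]; gcongr; exact hv k
    _ < v j := hj k (Ne.symm hne)
  linarith [le_mul_of_one_le_left (hv j) (by linarith : (1 : ℝ) ≤ c)]

theorem isDominant_iff_isDominant_mul {j : ι} (hc : 2 ≤ c) (hv : ∀ i, 0 ≤ v i)
    (hr₁ : ∀ i, 1 ≤ r i) (hr₂ : ∀ i, r i ≤ 2)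
    (hdom : ∃ k, IsDominant c v k) (hdom' : ∃ k, IsDominant c (v * r) k) :
    IsDominant c v j ↔ IsDominant c (v * r) j := by
  obtain ⟨k, hk⟩ := hdom
  obtain ⟨k', hk'⟩ := hdom'
  constructor
  · intro hj
    rwa [hj.eq_of_mul hc hv hr₁ hr₂ hk']
  · intro hj
    rwa [← hk.eq_of_mul hc hv hr₁ hr₂ hj]

end Dominance

theorem Set.OrdConnected.forall_of_forall_succ_iff {I : Set ℤ} (hI : I.OrdConnected)
    {Q : ℤ → Prop} (hQ : ∀ l ∈ I, l + 1 ∈ I → (Q l ↔ Q (l + 1)))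
    {l₀ : ℤ} (hl₀ : l₀ ∈ I) (hQ₀ : Q l₀) : ∀ l ∈ I, Q l := by
  intro l hl
  rcases le_total l₀ l with hle | hle
  · induction l, hle using Int.leInduction with
    | base => exact hQ₀
    | succ m hm ih =>
      have hmI : m ∈ I := hI.out hl₀ hl ⟨hm, by omega⟩
      exact (hQ m hmI hl).1 (ih hmI)
  · induction l, hle using Int.leInductionDown with
    | base => exact hQ₀
    | pred m hm ih =>
      have hmI : m ∈ I := hI.out hl hl₀ ⟨by omega, hm⟩
      exact (hQ (m - 1) hl (by simpa using hmI)).2 (by simpa using ih hmI)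

theorem one_le_rpow_inv_natCast_pow_le_two {n m : ℕ} (hn : 0 < n) (hm : m ≤ n) :
    1 ≤ ((2 : ℝ) ^ ((n : ℝ)⁻¹)) ^ m ∧ ((2 : ℝ) ^ ((n : ℝ)⁻¹)) ^ m ≤ 2 := by
  have h₁ : 1 ≤ (2 : ℝ) ^ ((n : ℝ)⁻¹) := one_le_rpow one_le_two (by positivity)
  refine ⟨one_le_pow₀ h₁, ?_⟩
  calc ((2 : ℝ) ^ ((n : ℝ)⁻¹)) ^ m ≤ ((2 : ℝ) ^ ((n : ℝ)⁻¹)) ^ n := pow_le_pow_right₀ h₁ hm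
    _ = 2 := rpow_inv_natCast_pow zero_le_two hn.ne'

theorem single_dominating_monomial_on_component_general
    (d n : ℕ) (hd : 2 ≤ d) (hn : 0 < n)
    (lam : ℝ) (hlam : lam = (2 : ℝ) ^ ((n : ℝ)⁻¹))
    (Γ₀ : ℝ) (hΓ₀ : 1 ≤ Γ₀)
    (a : Fin d → ℝ)
    (α : Fin d → ℕ) (hle : ∀ j, α j ≤ n)
    (I : Set ℤ) (hIconn : I.OrdConnected)
    (hIgood : ∀ l ∈ I, ∀ j j' : Fin d, j ≠ j' →
      (2 : ℝ) ^ Γ₀ * (|a j'| * lam ^ ((α j' : ℤ) * l)) < |a j| * lam ^ ((α j : ℤ) * l) ∨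
      (2 : ℝ) ^ Γ₀ * (|a j| * lam ^ ((α j : ℤ) * l)) < |a j'| * lam ^ ((α j' : ℤ) * l)) :
    ∃ j₁ : Fin d, ∀ l ∈ I, ∀ j' : Fin d, j' ≠ j₁ →
      (2 : ℝ) ^ Γ₀ * (|a j'| * lam ^ ((α j' : ℤ) * l)) < |a j₁| * lam ^ ((α j₁ : ℤ) * l) := by
  have : Nonempty (Fin d) := ⟨⟨0, by omega⟩⟩
  set v : ℤ → Fin d → ℝ := fun l j => |a j| * lam ^ ((α j : ℤ) * l)
  have hlam₀ : 0 < lam := hlam ▸ by positivity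
  have hv : ∀ l j, 0 ≤ v l j := fun l j => by positivity
  have hr : ∀ j, 1 ≤ lam ^ α j ∧ lam ^ α j ≤ 2 := fun j =>
    hlam ▸ one_le_rpow_inv_natCast_pow_le_two hn (hle j)
  have hstep : ∀ l, v (l + 1) = v l * fun j => lam ^ α j := fun l => funext fun j => by
    simp only [v, Pi.mul_apply, mul_add_one, zpow_add₀ hlam₀.ne', zpow_natCast, mul_assoc]
  have hc : (2 : ℝ) ≤ 2 ^ Γ₀ := by
    simpa using rpow_le_rpow_of_exponent_le one_le_two hΓ₀
  have hdom : ∀ l ∈ I, ∃ j, IsDominant (2 ^ Γ₀) (v l) j := fun l hl =>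
    exists_isDominant (by linarith) (hv l) (hIgood l hl)
  rcases I.eq_empty_or_nonempty with rfl | ⟨l₀, hl₀⟩
  · exact ⟨⟨0, by omega⟩, by simp⟩
  obtain ⟨j₁, hj₁⟩ := hdom l₀ hl₀
  refine ⟨j₁, hIconn.forall_of_forall_succ_iff (Q := fun l => IsDominant (2 ^ Γ₀) (v l) j₁)
    (fun l hl hl' => ?_) hl₀ hj₁⟩
  have hdom' := hdom (l + 1) hl'
  rw [hstep l] at hdom' ⊢
  exact isDominant_iff_isDominant_mul hc (hv l) (fun j => (hr j).1) (fun j => (hr j).2)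
    (hdom l hl) hdom'

/-- **On each connected component of the good scales exactly one monomial dominates.**
Let `d ≥ 2`, `n ∈ ℕ`, `λ = 2^{1/n}`, `Γ₀ ≥ 1`, let `a 1, …, a d` be nonzero reals and
`α 1 < … < α d ≤ n` positive integers.  Let `I ⊆ ℤ` be a set of consecutive integers
consisting of good scales: for every `l ∈ I` and every pair `j ≠ j'`, either
`|a j| λ^{α j l} > 2^{Γ₀} |a j'| λ^{α j' l}` or the reverse strict domination holds.
Then there is a single index `j₁` such that for every `l ∈ I` and every `j' ≠ j₁`,
`|a j₁| λ^{α j₁ l} > 2^{Γ₀} |a j'| λ^{α j' l}`. -/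
theorem single_dominating_monomial_on_component
    (d n : ℕ) (hd : 2 ≤ d) (hn : 0 < n)
    (lam : ℝ) (hlam : lam = (2 : ℝ) ^ ((n : ℝ)⁻¹))
    (Γ₀ : ℝ) (hΓ₀ : 1 ≤ Γ₀)
    (a : Fin d → ℝ) (ha : ∀ j, a j ≠ 0)
    (α : Fin d → ℕ) (hmono : StrictMono α) (hpos : ∀ j, 0 < α j) (hle : ∀ j, α j ≤ n)
    (I : Set ℤ) (hIconn : I.OrdConnected)
    (hIgood : ∀ l ∈ I, ∀ j j' : Fin d, j ≠ j' →
      (2 : ℝ) ^ Γ₀ * (|a j'| * lam ^ ((α j' : ℤ) * l)) < |a j| * lam ^ ((α j : ℤ) * l) ∨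
      (2 : ℝ) ^ Γ₀ * (|a j| * lam ^ ((α j : ℤ) * l)) < |a j'| * lam ^ ((α j' : ℤ) * l)) :
    ∃ j₁ : Fin d, ∀ l ∈ I, ∀ j' : Fin d, j' ≠ j₁ →
      (2 : ℝ) ^ Γ₀ * (|a j'| * lam ^ ((α j' : ℤ) * l)) < |a j₁| * lam ^ ((α j₁ : ℤ) * l) :=
  single_dominating_monomial_on_component_general d n hd hn lam hlam Γ₀ hΓ₀ a α hle I hIconn hIgood
end

section
/- Let d ≥ 1, let Q(t) = a_1 t^{α_1} + … + a_d t^{α_d} with real coefficients and distinct positive integer exponents α_1 < … < α_d = n, and let λ = 2^{1/n} and Γ₀ = 2^{10·d!}. Suppose that for some index j₁ and some l ∈ ℤ we have |a_{j₁}| λ^{α_{j₁} l} ≥ 2^{Γ₀} |a_{j'}| λ^{α_{j'} l} for every j' ≠ j₁. Then for every t with λ^{l−2} ≤ |t| ≤ λ^{l+1}, one has |Q(t)| ≤ 2 |a_{j₁}| |t|^{α_{j₁}}. -/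
/-!
Since every exponent is at most `n`, one step of the scale `λ` changes `t ^ α j` by a factor at
most `λ ^ α j ≤ 2`; so on `λ ^ (l - 2) ≤ |t| ≤ λ ^ (l + 1)` each monomial is comparable, up to
a factor `4`, to its value at `|t| = λ ^ l`. The domination hypothesis then makes every other
monomial at most `8 · 2 ^ (-Γ₀)` times the dominant one, and `8 (d - 1) ≤ 2 ^ Γ₀`.
-/

open Real

lemma rpow_inv_natCast_pow_le {x : ℝ} (hx : 1 ≤ x) {k n : ℕ} (hkn : k ≤ n) :
    (x ^ (n⁻¹ : ℝ)) ^ k ≤ x := by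
  rcases n.eq_zero_or_pos with rfl | hn
  · simpa [Nat.le_zero.mp hkn] using hx
  calc (x ^ (n⁻¹ : ℝ)) ^ k ≤ (x ^ (n⁻¹ : ℝ)) ^ n :=
        pow_le_pow_right₀ (one_le_rpow hx (by positivity)) hkn
    _ = x := rpow_inv_natCast_pow (by linarith) hn.ne'

section Scale

variable {lam s C : ℝ} {k : ℕ} {l : ℤ}

lemma pow_le_mul_zpow_of_le_zpow_add_one (hlam : 0 < lam) (hC : lam ^ k ≤ C) (hs0 : 0 ≤ s)
    (hs : s ≤ lam ^ (l + 1)) : s ^ k ≤ C * lam ^ ((k : ℤ) * l) := by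
  calc s ^ k ≤ (lam ^ (l + 1)) ^ k := pow_le_pow_left₀ hs0 hs k
    _ = lam ^ k * lam ^ ((k : ℤ) * l) := by
        rw [← zpow_natCast, ← zpow_mul, ← zpow_natCast, ← zpow_add₀ hlam.ne']
        ring_nf
    _ ≤ C * lam ^ ((k : ℤ) * l) := by gcongr

lemma zpow_le_mul_pow_of_zpow_sub_two_le (hlam : 0 < lam) (hC : lam ^ k ≤ C)
    (hs : lam ^ (l - 2) ≤ s) : lam ^ ((k : ℤ) * l) ≤ C ^ 2 * s ^ k := by
  calc lam ^ ((k : ℤ) * l) = (lam ^ k) ^ 2 * (lam ^ (l - 2)) ^ k := by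
        rw [← zpow_natCast, ← zpow_natCast (lam ^ (l - 2)), ← zpow_mul, ← zpow_natCast,
          ← zpow_mul, ← zpow_add₀ hlam.ne']
        ring_nf
    _ ≤ C ^ 2 * s ^ k := by gcongr

end Scale

lemma abs_sum_le_two_mul_of_dominant {ι : Type*} [Fintype ι] [DecidableEq ι] (f : ι → ℝ)
    (i : ι) (ε : ℝ) (hf : ∀ j ≠ i, |f j| ≤ ε * |f i|)
    (hε : (Fintype.card ι - 1 : ℝ) * ε ≤ 1) :
    |∑ j, f j| ≤ 2 * |f i| := by
  calc |∑ j, f j| ≤ ∑ j, |f j| := Finset.abs_sum_le_sum_abs _ _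
    _ = |f i| + ∑ j ∈ Finset.univ.erase i, |f j| :=
        (Finset.add_sum_erase _ _ (Finset.mem_univ i)).symm
    _ ≤ |f i| + ∑ j ∈ Finset.univ.erase i, ε * |f i| := by
        gcongr with j hj
        exact hf j (Finset.ne_of_mem_erase hj)
    _ = |f i| + ((Fintype.card ι - 1 : ℝ) * ε) * |f i| := by
        rw [Finset.sum_const, Finset.card_erase_of_mem (Finset.mem_univ i), nsmul_eq_mul,
          Finset.card_univ, Nat.cast_pred (Fintype.card_pos_iff.mpr ⟨i⟩), mul_assoc]
    _ ≤ 2 * |f i| := by nlinarith [abs_nonneg (f i)]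

lemma eight_mul_le_two_pow_two_pow (d : ℕ) : 8 * d ≤ 2 ^ 2 ^ (10 * d.factorial) := by
  have hd : d + 3 ≤ 2 ^ (10 * d.factorial) := by
    have := d.self_le_factorial
    have := d.factorial_pos
    have : 10 * d.factorial < 2 ^ (10 * d.factorial) := Nat.lt_two_pow_self
    omega
  calc 8 * d ≤ 2 ^ (d + 3) := by
        rw [pow_add]; have := (Nat.lt_two_pow_self (n := d)).le; omega
    _ ≤ 2 ^ 2 ^ (10 * d.factorial) := Nat.pow_le_pow_right two_pos hd

/-- **The dominating monomial controls the size of `Q` on the corresponding scales.**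
Let `d ≥ 1`, `Q(t) = ∑ j, a j * t ^ (α j)` with real coefficients and distinct positive
integer exponents `α 1 < … < α d = n`, `λ = 2^{1/n}`, `Γ₀ = 2^{10·d!}`.  If for some
index `j₁` and some `l ∈ ℤ` we have `|a j₁| λ^{α j₁ l} ≥ 2^{Γ₀} |a j'| λ^{α j' l}` for
every `j' ≠ j₁`, then for every `t` with `λ^{l−2} ≤ |t| ≤ λ^{l+1}` we have
`|Q(t)| ≤ 2 |a j₁| |t|^{α j₁}`. -/
theorem dominating_monomial_upper_bound
    (d : ℕ) (hd : 1 ≤ d) (n : ℕ)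
    (a : Fin d → ℝ) (α : Fin d → ℕ)
    (hmono : StrictMono α)
    (hlast : α ⟨d - 1, by omega⟩ = n)
    (lam : ℝ) (hlam : lam = (2 : ℝ) ^ ((n : ℝ)⁻¹))
    (Γ₀ : ℕ) (hΓ₀ : Γ₀ = 2 ^ (10 * Nat.factorial d))
    (j₁ : Fin d) (l : ℤ)
    (hdom : ∀ j' : Fin d, j' ≠ j₁ →
      (2 : ℝ) ^ Γ₀ * (|a j'| * lam ^ ((α j' : ℤ) * l)) ≤ |a j₁| * lam ^ ((α j₁ : ℤ) * l)) :
    ∀ t : ℝ, lam ^ (l - 2) ≤ |t| → |t| ≤ lam ^ (l + 1) →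
      |∑ j, a j * t ^ α j| ≤ 2 * |a j₁| * |t| ^ α j₁ := by
  intro t ht_lower ht_upper
  have hlam0 : 0 < lam := hlam ▸ by positivity
  have hα_le (j : Fin d) : α j ≤ n :=
    hlast ▸ hmono.monotone (Fin.le_iff_val_le_val.mpr (Nat.le_sub_one_of_lt j.isLt))
  have hlamα (j : Fin d) : lam ^ α j ≤ 2 := hlam ▸ rpow_inv_natCast_pow_le one_le_two (hα_le j)
  have hterm (j : Fin d) (hj : j ≠ j₁) :
      |a j * t ^ α j| ≤ 8 / 2 ^ Γ₀ * |a j₁ * t ^ α j₁| := by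
    have hdom' :
        |a j| * lam ^ ((α j : ℤ) * l) ≤ |a j₁| * lam ^ ((α j₁ : ℤ) * l) / 2 ^ Γ₀ := by
      rw [le_div_iff₀ (by positivity)]; linarith [hdom j hj]
    rw [abs_mul, abs_mul, abs_pow, abs_pow]
    calc |a j| * |t| ^ α j ≤ |a j| * (2 * lam ^ ((α j : ℤ) * l)) := by
          gcongr
          exact pow_le_mul_zpow_of_le_zpow_add_one hlam0 (hlamα j) (abs_nonneg t) ht_upper
      _ ≤ 2 * (|a j₁| * lam ^ ((α j₁ : ℤ) * l) / 2 ^ Γ₀) := by linarith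
      _ ≤ 2 * (|a j₁| * (2 ^ 2 * |t| ^ α j₁) / 2 ^ Γ₀) := by
          gcongr; exact zpow_le_mul_pow_of_zpow_sub_two_le hlam0 (hlamα j₁) ht_lower
      _ = 8 / 2 ^ Γ₀ * (|a j₁| * |t| ^ α j₁) := by ring
  have hcount : (Fintype.card (Fin d) - 1 : ℝ) * (8 / 2 ^ Γ₀) ≤ 1 := by
    have h8 : (8 * d : ℝ) ≤ 2 ^ Γ₀ := by exact_mod_cast hΓ₀ ▸ eight_mul_le_two_pow_two_pow d
    rw [Fintype.card_fin, ← mul_div_assoc, div_le_one (by positivity)]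
    linarith
  simpa only [abs_mul, abs_pow, mul_assoc] using
    abs_sum_le_two_mul_of_dominant (fun j ↦ a j * t ^ α j) j₁ _ hterm hcount
end
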